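/- Suppose 0 ≤ a < b ≤ l, τ is continuous and nonvanishing on [a,b], κ is continuous on [a,b], and θ ∈ W^{1,4}([a,b]) has finite localized energy E_I(θ) = ∫_a^b (κ² cos²θ + (θ'+τ)²)²/(κ² cos²θ) dt. Then |θ(a) − θ(b)| ≥ A(b−a) − B^{1/2}(b−a)^{3/4} E_I(θ)^{1/4}, where A = min_{t∈[a,b]} |τ(t)| and B = max_{t∈[a,b]} |κ(t) cos θ(t)|. -/

import Mathlib

/-!
Since `τ` is continuous and nonvanishing, it has constant sign on `[a, b]`, so
`|∫ τ| ≥ A (b - a)`. Writing `τ = (θ' + τ) - θ'` with `∫ θ' = θ b - θ a`, it remains to bound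
`∫ |θ' + τ|`. Hölder with exponents `4` and `4/3` applied to
`|θ' + τ| = (|θ' + τ|⁴ / κ²cos²θ)^(1/4) · (κ²cos²θ)^(1/4)` does this: the first factor integrates
to at most the energy and the second is at most `B^(1/2)` pointwise. Finiteness of the energy
forces `θ' + τ = 0` a.e. where `κ cos θ = 0`, which makes the factorization valid there.
-/

open MeasureTheory Set Real
open scoped ENNReal

/-- The localized bending energy `E_I(θ) = ∫_a^b (κ²cos²θ + (θ'+τ)²)²/(κ²cos²θ) dt`. -/
noncomputable def locEnergy (a b : ℝ) (κ τ θ θ' : ℝ → ℝ) : ℝ≥0∞ :=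
  ∫⁻ t in Icc a b,
    ENNReal.ofReal ((κ t ^ 2 * cos (θ t) ^ 2 + (θ' t + τ t) ^ 2) ^ 2) /
      ENNReal.ofReal (κ t ^ 2 * cos (θ t) ^ 2)

theorem IsPreconnected.pos_or_neg_of_ne_zero {X : Type*} [TopologicalSpace X] {s : Set X}
    (hs : IsPreconnected s) {f : X → ℝ} (hf : ContinuousOn f s) (h0 : ∀ x ∈ s, f x ≠ 0) :
    (∀ x ∈ s, 0 < f x) ∨ (∀ x ∈ s, f x < 0) := by
  by_contra! ⟨⟨x, hx, hfx⟩, ⟨y, hy, hfy⟩⟩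
  obtain ⟨z, hz, hfz⟩ := hs.intermediate_value hx hy hf ⟨hfx, hfy⟩
  exact h0 z hz hfz

theorem intervalIntegral.mul_le_abs_integral {a b A : ℝ} {f : ℝ → ℝ} (hab : a ≤ b)
    (hf : ContinuousOn f (Icc a b)) (h0 : ∀ t ∈ Icc a b, f t ≠ 0)
    (hA : ∀ t ∈ Icc a b, A ≤ |f t|) :
    A * (b - a) ≤ |∫ t in a..b, f t| := by
  have hconst : ∫ _ in a..b, A = A * (b - a) := by
    rw [intervalIntegral.integral_const, smul_eq_mul, mul_comm]
  have hfi : IntervalIntegrable f volume a b := hf.intervalIntegrable_of_Icc hab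
  rcases isPreconnected_Icc.pos_or_neg_of_ne_zero hf h0 with hpos | hneg
  · calc A * (b - a) = ∫ _ in a..b, A := hconst.symm
      _ ≤ ∫ t in a..b, f t := intervalIntegral.integral_mono_on hab
          intervalIntegrable_const hfi fun t ht => (hA t ht).trans (abs_of_pos (hpos t ht)).le
      _ ≤ |∫ t in a..b, f t| := le_abs_self _
  · calc A * (b - a) = ∫ _ in a..b, A := hconst.symm
      _ ≤ ∫ t in a..b, -f t := intervalIntegral.integral_mono_on hab
          intervalIntegrable_const hfi.neg fun t ht => (hA t ht).trans (abs_of_neg (hneg t ht)).le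
      _ = -∫ t in a..b, f t := intervalIntegral.integral_neg
      _ ≤ |∫ t in a..b, f t| := neg_le_abs _

theorem ContinuousOn.of_eq_add_intervalIntegral {a b : ℝ} {f f' : ℝ → ℝ}
    (hf' : IntegrableOn f' (Icc a b)) (hf : ∀ x ∈ Icc a b, f x = f a + ∫ t in a..x, f' t) :
    ContinuousOn f (Icc a b) := by
  refine ((continuousOn_const (c := f a)).add
    (intervalIntegral.continuousOn_primitive hf')).congr fun x hx => ?_
  rw [hf x hx, intervalIntegral.integral_of_le hx.1, Pi.add_apply]

theorem ENNReal.lintegral_le_Lp_div_mul_Lq {α : Type*} [MeasurableSpace α] {μ : Measure α}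
    {p q : ℝ} (hpq : p.HolderConjugate q) {F G : α → ℝ≥0∞} (hF : AEMeasurable F μ)
    (hG : AEMeasurable G μ) (hG_top : ∀ x, G x ≠ ∞) (hFG : ∀ᵐ x ∂μ, G x = 0 → F x = 0) :
    ∫⁻ x, F x ∂μ ≤ (∫⁻ x, F x ^ p / G x ∂μ) ^ (1 / p) * (∫⁻ x, G x ^ (q / p) ∂μ) ^ (1 / q) := by
  have hp0 : 0 < p := hpq.pos
  have hF_le : ∀ᵐ x ∂μ, F x ≤ (F x ^ p / G x) ^ (1 / p) * G x ^ (1 / p) := by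
    filter_upwards [hFG] with x hx
    rcases eq_or_ne (G x) 0 with hG0 | hG0
    · simp [hx hG0]
    · rw [← ENNReal.mul_rpow_of_nonneg _ _ (by positivity), ENNReal.div_mul_cancel hG0 (hG_top x),
        ← ENNReal.rpow_mul, mul_one_div_cancel hp0.ne', ENNReal.rpow_one]
  calc ∫⁻ x, F x ∂μ ≤ ∫⁻ x, (F x ^ p / G x) ^ (1 / p) * G x ^ (1 / p) ∂μ := lintegral_mono_ae hF_le
    _ ≤ (∫⁻ x, ((F x ^ p / G x) ^ (1 / p)) ^ p ∂μ) ^ (1 / p) *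
          (∫⁻ x, (G x ^ (1 / p)) ^ q ∂μ) ^ (1 / q) :=
        ENNReal.lintegral_mul_le_Lp_mul_Lq μ hpq (((hF.pow_const p).div hG).pow_const _)
          (hG.pow_const _)
    _ = (∫⁻ x, F x ^ p / G x ∂μ) ^ (1 / p) * (∫⁻ x, G x ^ (q / p) ∂μ) ^ (1 / q) := by
        simp only [← ENNReal.rpow_mul, one_div_mul_cancel hp0.ne', ENNReal.rpow_one,
          one_div_mul_eq_div]

section BendingEnergy

variable {α : Type*} [MeasurableSpace α] {μ : Measure α} {k s : α → ℝ}

noncomputable def bendingEnergy (μ : Measure α) (k s : α → ℝ) : ℝ≥0∞ :=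
  ∫⁻ x, ENNReal.ofReal ((k x ^ 2 + s x ^ 2) ^ 2) / ENNReal.ofReal (k x ^ 2) ∂μ

theorem AEMeasurable.bendingEnergy_integrand (hk : AEMeasurable k μ) (hs : AEMeasurable s μ) :
    AEMeasurable (fun x => ENNReal.ofReal ((k x ^ 2 + s x ^ 2) ^ 2) / ENNReal.ofReal (k x ^ 2)) μ :=
  (((hk.pow_const 2).add (hs.pow_const 2)).pow_const 2).ennreal_ofReal.div
    (hk.pow_const 2).ennreal_ofReal

theorem ae_eq_zero_of_bendingEnergy_ne_top (hk : AEMeasurable k μ) (hs : AEMeasurable s μ)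
    (hE : bendingEnergy μ k s ≠ ∞) : ∀ᵐ x ∂μ, k x = 0 → s x = 0 := by
  filter_upwards [ae_lt_top' (hk.bendingEnergy_integrand hs) hE] with x hx hk0
  by_contra hs0
  have hnum : ENNReal.ofReal ((0 + s x ^ 2) ^ 2) ≠ 0 := by
    rw [ne_eq, ENNReal.ofReal_eq_zero, not_le]
    positivity
  rw [hk0, zero_pow two_ne_zero, ENNReal.ofReal_zero, ENNReal.div_zero hnum] at hx
  exact lt_irrefl _ hx

theorem lintegral_abs_le_bendingEnergy (hk : AEMeasurable k μ) (hs : AEMeasurable s μ)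
    {B : ℝ} (hB : ∀ᵐ x ∂μ, |k x| ≤ B) (hE : bendingEnergy μ k s ≠ ∞) :
    ∫⁻ x, ENNReal.ofReal |s x| ∂μ ≤
      bendingEnergy μ k s ^ (1 / 4 : ℝ) *
        (ENNReal.ofReal (B ^ 2) ^ (1 / 3 : ℝ) * μ univ) ^ (3 / 4 : ℝ) := by
  have hpq : (4 : ℝ).HolderConjugate (4 / 3) :=
    Real.holderConjugate_iff.mpr ⟨by norm_num, by norm_num⟩
  have hFG : ∀ᵐ x ∂μ, ENNReal.ofReal (k x ^ 2) = 0 → ENNReal.ofReal |s x| = 0 := by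
    filter_upwards [ae_eq_zero_of_bendingEnergy_ne_top hk hs hE] with x hx hk0
    simp_all
  have hdensity_le : ∫⁻ x, ENNReal.ofReal |s x| ^ (4 : ℝ) / ENNReal.ofReal (k x ^ 2) ∂μ ≤
      bendingEnergy μ k s := by
    refine lintegral_mono fun x => ENNReal.div_le_div_right ?_ _
    rw [ENNReal.ofReal_rpow_of_nonneg (abs_nonneg _) (by norm_num)]
    refine ENNReal.ofReal_le_ofReal ?_
    have : |s x| ^ (4 : ℝ) = (s x ^ 2) ^ 2 := by
      rw [show (4 : ℝ) = (4 : ℕ) by norm_num, rpow_natCast, ← pow_mul, Even.pow_abs ⟨2, rfl⟩]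
    nlinarith [sq_nonneg (k x), sq_nonneg (s x)]
  have hweight_le : ∫⁻ x, ENNReal.ofReal (k x ^ 2) ^ (1 / 3 : ℝ) ∂μ ≤
      ENNReal.ofReal (B ^ 2) ^ (1 / 3 : ℝ) * μ univ := by
    rw [← lintegral_const]
    refine lintegral_mono_ae ?_
    filter_upwards [hB] with x hx
    refine ENNReal.rpow_le_rpow (ENNReal.ofReal_le_ofReal ?_) (by norm_num)
    rw [← sq_abs]
    exact pow_le_pow_left₀ (abs_nonneg _) hx 2
  calc ∫⁻ x, ENNReal.ofReal |s x| ∂μ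
      ≤ (∫⁻ x, ENNReal.ofReal |s x| ^ (4 : ℝ) / ENNReal.ofReal (k x ^ 2) ∂μ) ^ (1 / 4 : ℝ) *
          (∫⁻ x, ENNReal.ofReal (k x ^ 2) ^ ((4 / 3 : ℝ) / 4) ∂μ) ^ (1 / (4 / 3) : ℝ) :=
        ENNReal.lintegral_le_Lp_div_mul_Lq hpq hs.abs.ennreal_ofReal
          (hk.pow_const 2).ennreal_ofReal (fun _ => ENNReal.ofReal_ne_top) hFG
    _ ≤ _ := by
        rw [show (4 / 3 / 4 : ℝ) = 1 / 3 by norm_num, show (1 / (4 / 3) : ℝ) = 3 / 4 by norm_num]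
        exact mul_le_mul' (ENNReal.rpow_le_rpow hdensity_le (by norm_num))
          (ENNReal.rpow_le_rpow hweight_le (by norm_num))

theorem integral_abs_le_bendingEnergy [IsFiniteMeasure μ] (hk : AEMeasurable k μ)
    (hs : AEMeasurable s μ) {B : ℝ} (hB0 : 0 ≤ B) (hB : ∀ᵐ x ∂μ, |k x| ≤ B)
    (hE : bendingEnergy μ k s ≠ ∞) :
    ∫ x, |s x| ∂μ ≤
      B ^ (1 / 2 : ℝ) * μ.real univ ^ (3 / 4 : ℝ) * (bendingEnergy μ k s).toReal ^ (1 / 4 : ℝ) := by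
  have hrhs : (bendingEnergy μ k s ^ (1 / 4 : ℝ) *
      (ENNReal.ofReal (B ^ 2) ^ (1 / 3 : ℝ) * μ univ) ^ (3 / 4 : ℝ)).toReal =
      B ^ (1 / 2 : ℝ) * μ.real univ ^ (3 / 4 : ℝ) * (bendingEnergy μ k s).toReal ^ (1 / 4 : ℝ) := by
    rw [ENNReal.toReal_mul, ← ENNReal.toReal_rpow, ← ENNReal.toReal_rpow, ENNReal.toReal_mul,
      ← ENNReal.toReal_rpow, ENNReal.toReal_ofReal (sq_nonneg B), ← measureReal_def,
      mul_rpow (by positivity) measureReal_nonneg, ← rpow_natCast, ← rpow_mul hB0,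
      ← rpow_mul hB0]
    norm_num
    ring
  rw [integral_eq_lintegral_of_nonneg_ae (.of_forall fun _ => abs_nonneg _)
    hs.abs.aestronglyMeasurable, ← hrhs]
  refine ENNReal.toReal_mono ?_ (lintegral_abs_le_bendingEnergy hk hs hB hE)
  exact ENNReal.mul_ne_top (ENNReal.rpow_ne_top_of_nonneg (by norm_num) hE)
    (ENNReal.rpow_ne_top_of_nonneg (by norm_num)
      (ENNReal.mul_ne_top (ENNReal.rpow_ne_top_of_nonneg (by norm_num) ENNReal.ofReal_ne_top)
        (measure_ne_top μ univ)))

end BendingEnergy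

theorem singularities_lemma_general (a b : ℝ) (h : a < b)
    (κ τ θ θ' : ℝ → ℝ)
    (hκ : ContinuousOn κ (Icc a b))
    (hτ : ContinuousOn τ (Icc a b)) (hτ0 : ∀ t ∈ Icc a b, τ t ≠ 0)
    (hrep : ∀ x ∈ Icc a b, θ x = θ a + ∫ t in a..x, θ' t)
    (hLp : MemLp θ' 4 (volume.restrict (Icc a b)))
    (hfin : locEnergy a b κ τ θ θ' ≠ ∞) :
    sInf ((fun t => |τ t|) '' Icc a b) * (b - a) -
        (sSup ((fun t => |κ t * cos (θ t)|) '' Icc a b)) ^ ((1:ℝ)/2) *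
          (b - a) ^ ((3:ℝ)/4) * (locEnergy a b κ τ θ θ').toReal ^ ((1:ℝ)/4) ≤
      |θ a - θ b| := by
  have hθ' : IntegrableOn θ' (Icc a b) := hLp.integrable (by norm_num)
  have hθ : ContinuousOn θ (Icc a b) := .of_eq_add_intervalIntegral hθ' hrep
  have hk : ContinuousOn (fun t => κ t * cos (θ t)) (Icc a b) :=
    hκ.mul (continuous_cos.comp_continuousOn hθ)
  have hBbdd := (isCompact_Icc.image_of_continuousOn hk.abs).bddAbove
  have hE : locEnergy a b κ τ θ θ' =
      bendingEnergy (volume.restrict (Icc a b)) (fun t => κ t * cos (θ t)) (θ' + τ) := by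
    simp only [locEnergy, bendingEnergy, mul_pow, Pi.add_apply]
  have hτ_lower := intervalIntegral.mul_le_abs_integral h.le hτ hτ0 fun t ht =>
    csInf_le ⟨0, forall_mem_image.2 fun _ _ => abs_nonneg _⟩ (mem_image_of_mem _ ht)
  have hdefect := integral_abs_le_bendingEnergy (hk.aemeasurable measurableSet_Icc)
    (hLp.aestronglyMeasurable.aemeasurable.add (hτ.aemeasurable measurableSet_Icc))
    (le_csSup_of_le hBbdd (mem_image_of_mem _ (left_mem_Icc.2 h.le)) (abs_nonneg _))
    (ae_restrict_of_forall_mem measurableSet_Icc fun t ht =>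
      le_csSup hBbdd (mem_image_of_mem _ ht))
    (hE ▸ hfin)
  rw [← hE, measureReal_restrict_apply_univ, Real.volume_real_Icc_of_le h.le,
    integral_Icc_eq_integral_Ioc, ← intervalIntegral.integral_of_le h.le] at hdefect
  have hθab : θ b - θ a = ∫ t in a..b, θ' t := by rw [hrep b (right_mem_Icc.2 h.le)]; ring
  have hsplit : ∫ t in a..b, τ t = (∫ t in a..b, (θ' + τ) t) - ∫ t in a..b, θ' t := by
    rw [Pi.add_def, intervalIntegral.integral_add
      ((intervalIntegrable_iff_integrableOn_Icc_of_le h.le).2 hθ')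
      (hτ.intervalIntegrable_of_Icc h.le)]
    ring
  calc _ ≤ |∫ t in a..b, τ t| - ∫ t in a..b, |(θ' + τ) t| := by linarith
    _ ≤ |∫ t in a..b, θ' t| := by
        rw [hsplit]
        linarith [abs_sub (∫ t in a..b, (θ' + τ) t) (∫ t in a..b, θ' t),
          intervalIntegral.abs_integral_le_integral_abs (f := θ' + τ) (μ := volume) h.le]
    _ = |θ a - θ b| := by rw [← hθab, abs_sub_comm]

/-- Lemma 6.1: if `τ` is continuous and nonvanishing on `[a,b]`, then
`|θ(a) − θ(b)| ≥ A(b−a) − B^{1/2}(b−a)^{3/4} E_I(θ)^{1/4}`, where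
`A = min_{[a,b]} |τ|` and `B = max_{[a,b]} |κ cos θ|`. -/
theorem singularities_lemma (l a b : ℝ) (hab : 0 ≤ a) (h : a < b) (hbl : b ≤ l)
    (κ τ θ θ' : ℝ → ℝ)
    (hκ : ContinuousOn κ (Icc a b))
    (hτ : ContinuousOn τ (Icc a b)) (hτ0 : ∀ t ∈ Icc a b, τ t ≠ 0)
    (hrep : ∀ x ∈ Icc a b, θ x = θ a + ∫ t in a..x, θ' t)
    (hLp : MemLp θ' 4 (volume.restrict (Icc a b)))
    (hfin : locEnergy a b κ τ θ θ' ≠ ∞) :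
    sInf ((fun t => |τ t|) '' Icc a b) * (b - a) -
        (sSup ((fun t => |κ t * cos (θ t)|) '' Icc a b)) ^ ((1:ℝ)/2) *
          (b - a) ^ ((3:ℝ)/4) * (locEnergy a b κ τ θ θ').toReal ^ ((1:ℝ)/4) ≤
      |θ a - θ b| :=
  singularities_lemma_general a b h κ τ θ θ' hκ hτ hτ0 hrep hLp hfin
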